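/- arXiv:1509.01667 — 5 statements merged into one kernel-verified Lean document; each statement's English description precedes it below -/
import Mathlib

section
/- For distinct real numbers Z_1, ..., Z_N, define U_μ = ∏_{ν≠μ} (Z_ν − Z_μ) and A_μ^{(i)} = Σ_{ν_1<...<ν_i, ν_k≠μ} Z_{ν_1}···Z_{ν_i} (with A_μ^{(0)} = 1). Then for all i, j ∈ {0, ..., N−1}: Σ_μ (A_μ^{(i)} / U_μ) · (−Z_μ)^{N−1−j} = δ_{ij}. -/
/-!
Take the Lagrange basis `L_μ` at the nodes `-Z_μ`. Its numerator is `∏_{ν≠μ} (X + Z_ν)`, whose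
coefficient of `X^(N-1-i)` is `A_μ^{(i)}`, and its denominator is exactly `U_μ`. Interpolating
`X^(N-1-j)`, which has degree `< N`, gives `X^(N-1-j) = ∑_μ (-Z_μ)^(N-1-j) L_μ`; comparing
coefficients of `X^(N-1-i)` yields the identity.
-/

open Finset Polynomial

namespace Lagrange

variable {F ι : Type*} [Field F] [DecidableEq ι] {s : Finset ι} {v : ι → F}

theorem basis_eq_C_mul_prod_X_sub_C (i : ι) :
    Lagrange.basis s v i =
      C (∏ j ∈ s.erase i, (v i - v j))⁻¹ * ∏ j ∈ s.erase i, (X - C (v j)) := by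
  simp only [Lagrange.basis, basisDivisor, prod_mul_distrib, ← map_prod, prod_inv_distrib]

theorem coeff_eq_sum_eval_mul_coeff_basis (hvs : Set.InjOn v s) {f : F[X]}
    (hf : f.degree < #s) (k : ℕ) :
    f.coeff k = ∑ i ∈ s, f.eval (v i) * (Lagrange.basis s v i).coeff k := by
  conv_lhs => rw [eq_interpolate hvs hf, interpolate_apply, finsetSum_coeff]
  simp only [coeff_C_mul]

theorem coeff_basis_neg (z : ι → F) {μ : ι} (hμ : μ ∈ s) {k : ℕ} (hk : k < #s) :
    (Lagrange.basis s (-z) μ).coeff (#s - 1 - k) =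
      (∑ t ∈ (s.erase μ).powersetCard k, ∏ ν ∈ t, z ν) / ∏ ν ∈ s.erase μ, (z ν - z μ) := by
  have hcard : #(s.erase μ) = #s - 1 := card_erase_of_mem hμ
  have hcoeff := (s.erase μ).prod_X_add_C_coeff z (k := #s - 1 - k) (by omega)
  rw [hcard, Nat.sub_sub_self (by omega)] at hcoeff
  simp only [basis_eq_C_mul_prod_X_sub_C, Pi.neg_apply, map_neg, sub_neg_eq_add, coeff_C_mul,
    hcoeff, neg_add_eq_sub, div_eq_inv_mul]

end Lagrange

theorem sum_esymm_erase_div_prod_mul_neg_pow {F ι : Type*} [Field F] [DecidableEq ι]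
    {s : Finset ι} {z : ι → F} (hz : Set.InjOn z s) {i j : ℕ} (hi : i < #s) (hj : j < #s) :
    ∑ μ ∈ s, (∑ t ∈ (s.erase μ).powersetCard i, ∏ ν ∈ t, z ν) / (∏ ν ∈ s.erase μ, (z ν - z μ)) *
      (-z μ) ^ (#s - 1 - j) = if i = j then 1 else 0 := by
  have hneg : Set.InjOn (-z) s := fun a ha b hb h => hz ha hb (neg_injective h)
  have hdeg : ((X : F[X]) ^ (#s - 1 - j)).degree < #s := by
    rw [degree_X_pow]; exact_mod_cast (by omega : #s - 1 - j < #s)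
  have hcoeff := Lagrange.coeff_eq_sum_eval_mul_coeff_basis hneg hdeg (#s - 1 - i)
  rw [coeff_X_pow] at hcoeff
  simp only [eval_pow, eval_X, Pi.neg_apply] at hcoeff
  have hij : (#s - 1 - i = #s - 1 - j) ↔ i = j := by omega
  rw [← if_congr hij rfl rfl, hcoeff]
  refine sum_congr rfl fun μ hμ => ?_
  rw [Lagrange.coeff_basis_neg z hμ hi, mul_comm]

theorem stmt_0_general (N : ℕ) (Z : Fin N → ℝ)
    (hZ : Function.Injective Z)
    (U : Fin N → ℝ) (hU : ∀ μ, U μ = ∏ ν ∈ univ.erase μ, (Z ν - Z μ))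
    (A : Fin N → ℕ → ℝ)
    (hA : ∀ μ i, A μ i = ∑ t ∈ (univ.erase μ).powersetCard i, ∏ ν ∈ t, Z ν) :
    ∀ i j : ℕ, i < N → j < N →
      ∑ μ, A μ i / U μ * (-Z μ) ^ (N - 1 - j) = if i = j then 1 else 0 := by
  intro i j hi hj
  have hcard : #(univ : Finset (Fin N)) = N := card_fin N
  have key := sum_esymm_erase_div_prod_mul_neg_pow hZ.injOn (hcard ▸ hi) (hcard ▸ hj)
  rw [hcard] at key
  simpa only [hA, hU] using key

theorem stmt_0 (N : ℕ) (hN : 0 < N) (Z : Fin N → ℝ)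
    (hZ : Function.Injective Z)
    (U : Fin N → ℝ) (hU : ∀ μ, U μ = ∏ ν ∈ univ.erase μ, (Z ν - Z μ))
    (A : Fin N → ℕ → ℝ)
    (hA : ∀ μ i, A μ i = ∑ t ∈ (univ.erase μ).powersetCard i, ∏ ν ∈ t, Z ν) :
    ∀ i j : ℕ, i < N → j < N →
      ∑ μ, A μ i / U μ * (-Z μ) ^ (N - 1 - j) = if i = j then 1 else 0 :=
  stmt_0_general N Z hZ U hU A hA
end

section
/- For distinct real numbers Z_1, ..., Z_N and U_μ = ∏_{α≠μ}(Z_α − Z_μ), for every fixed ν: (1/U_ν) · Σ_{μ≠ν} 1/(Z_μ − Z_ν) = Σ_{μ≠ν} (1/U_μ) · 1/(Z_ν − Z_μ). -/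
open Finset Polynomial

namespace Lagrange

variable {F ι : Type*} [Field F] [DecidableEq ι] {s : Finset ι} {v : ι → F} {i j : ι}

theorem basis_eq_C_nodalWeight_mul_nodal_erase (s : Finset ι) (v : ι → F) (i : ι) :
    Lagrange.basis s v i = C (nodalWeight s v i) * nodal (s.erase i) v := by
  simp only [Lagrange.basis, basisDivisor, nodalWeight, nodal, prod_mul_distrib, map_prod]

theorem eval_nodal_erase_eq_mul_inv_sub {x : F} (hj : j ∈ s) (hx : x ≠ v j) :
    eval x (nodal (s.erase j) v) = eval x (nodal s v) * (x - v j)⁻¹ := by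
  rw [nodal_eq_mul_nodal_erase hj, eval_mul, eval_sub, eval_X, eval_C,
    eq_mul_inv_iff_mul_eq₀ (sub_ne_zero.mpr hx), mul_comm]

theorem eval_derivative_nodal_erase_of_ne (hvs : Set.InjOn v s) (hi : i ∈ s) (hj : j ∈ s)
    (hij : i ≠ j) :
    eval (v i) (derivative (nodal (s.erase j) v)) =
      eval (v i) (nodal (s.erase i) v) * (v i - v j)⁻¹ := by
  have hvij : v i - v j ≠ 0 := sub_ne_zero.mpr fun h => hij (hvs hi hj h)
  have hD := eval_nodal_derivative_eval_node_eq (v := v) hi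
  rw [nodal_eq_mul_nodal_erase hj, derivative_mul, eval_add, eval_mul, eval_mul,
    eval_nodal_at_node (mem_erase.mpr ⟨hij, hi⟩), mul_zero, zero_add, eval_sub, eval_X,
    eval_C] at hD
  rw [eq_mul_inv_iff_mul_eq₀ hvij, ← hD, mul_comm]

theorem eval_derivative_nodal_erase_self (hvs : Set.InjOn v s) (hi : i ∈ s) :
    eval (v i) (derivative (nodal (s.erase i) v)) =
      eval (v i) (nodal (s.erase i) v) * ∑ j ∈ s.erase i, (v i - v j)⁻¹ := by
  rw [derivative_nodal, eval_finsetSum, mul_sum]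
  refine sum_congr rfl fun j hj => eval_nodal_erase_eq_mul_inv_sub hj fun h => ?_
  obtain ⟨hji, hj⟩ := mem_erase.mp hj
  exact hji (hvs hj hi h.symm)

theorem sum_nodalWeight_mul_eval_derivative_nodal_erase (hvs : Set.InjOn v s) (hs : s.Nonempty)
    (x : F) : ∑ j ∈ s, nodalWeight s v j * eval x (derivative (nodal (s.erase j) v)) = 0 := by
  have h := congrArg (fun p => eval x (derivative p)) (sum_basis hvs hs)
  simpa [basis_eq_C_nodalWeight_mul_nodal_erase, eval_finsetSum] using h

/-- Differentiating `∑ j, basis s v j = 1` at the node `v i`. -/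
theorem nodalWeight_mul_sum_inv_sub (hvs : Set.InjOn v s) (hi : i ∈ s) :
    nodalWeight s v i * ∑ j ∈ s.erase i, (v i - v j)⁻¹ =
      ∑ j ∈ s.erase i, nodalWeight s v j * (v j - v i)⁻¹ := by
  have hP : eval (v i) (nodal (s.erase i) v) ≠ 0 := by
    simpa [nodalWeight_eq_eval_nodal_erase_inv] using nodalWeight_ne_zero hvs hi
  have hexpand : ∑ j ∈ s, nodalWeight s v j * eval (v i) (derivative (nodal (s.erase j) v)) =
      eval (v i) (nodal (s.erase i) v) * (nodalWeight s v i * ∑ j ∈ s.erase i, (v i - v j)⁻¹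
        + ∑ j ∈ s.erase i, nodalWeight s v j * (v i - v j)⁻¹) := by
    rw [← add_sum_erase _ _ hi, eval_derivative_nodal_erase_self hvs hi, mul_add]
    congr 1
    · ring
    · rw [mul_sum]
      refine sum_congr rfl fun j hj => ?_
      rw [eval_derivative_nodal_erase_of_ne hvs hi (mem_of_mem_erase hj) (ne_of_mem_erase hj).symm]
      ring
  have hzero := sum_nodalWeight_mul_eval_derivative_nodal_erase hvs ⟨i, hi⟩ (v i)
  rw [hexpand, mul_eq_zero, or_iff_right hP] at hzero
  rw [eq_neg_of_add_eq_zero_left hzero, ← sum_neg_distrib]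
  exact sum_congr rfl fun j _ => by rw [← neg_sub (v i) (v j), inv_neg, mul_neg]

end Lagrange

theorem stmt_2_general (N : ℕ) (Z : Fin N → ℝ)
    (hZ : Function.Injective Z)
    (U : Fin N → ℝ) (hU : ∀ μ, U μ = ∏ α ∈ univ.erase μ, (Z α - Z μ)) :
    ∀ ν : Fin N,
      (1 / U ν) * ∑ μ ∈ univ.erase ν, 1 / (Z μ - Z ν)
        = ∑ μ ∈ univ.erase ν, (1 / U μ) * (1 / (Z ν - Z μ)) := by
  intro ν
  -- `1 / U μ` is the nodal weight of the reflected nodes `-Z`.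
  have hweight : ∀ μ, 1 / U μ = Lagrange.nodalWeight univ (-Z) μ := fun μ => by
    simp only [hU, Lagrange.nodalWeight, Pi.neg_apply, neg_sub_neg, prod_inv_distrib, one_div]
  have key := Lagrange.nodalWeight_mul_sum_inv_sub (v := -Z)
    (fun a _ b _ h => hZ (neg_injective h)) (mem_univ ν)
  simp only [Pi.neg_apply, neg_sub_neg] at key
  simpa only [hweight, one_div] using key

theorem stmt_2 (N : ℕ) (hN : 2 ≤ N) (Z : Fin N → ℝ)
    (hZ : Function.Injective Z)
    (U : Fin N → ℝ) (hU : ∀ μ, U μ = ∏ α ∈ univ.erase μ, (Z α - Z μ)) :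
    ∀ ν : Fin N,
      (1 / U ν) * ∑ μ ∈ univ.erase ν, 1 / (Z μ - Z ν)
        = ∑ μ ∈ univ.erase ν, (1 / U μ) * (1 / (Z ν - Z μ)) :=
  stmt_2_general N Z hZ U hU
end

section
/- For distinct nonzero real numbers Z_1, ..., Z_N, with U_μ = ∏_{ν≠μ}(Z_ν − Z_μ), A_μ^{(j)} the j-th elementary symmetric polynomial of {Z_ν : ν≠μ}, A^{(j)} the j-th elementary symmetric polynomial of all Z_μ, and A^{(N)} = Z_1···Z_N: Σ_μ A_μ^{(j)} / (Z_μ · U_μ) = A^{(j)} / A^{(N)} for all j ∈ {0, ..., N−1}. -/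
/-!
Put `f_j(x) = ∑_{k ≤ j} A^{(j-k)} (-x)^k`. The recursion `A^{(i+1)} = A_μ^{(i+1)} + Z_μ A_μ^{(i)}`
gives `f_j(Z_μ) = A_μ^{(j)}`, and `f_j(0) = A^{(j)}`. Since `deg f_j ≤ j < N`, Lagrange
interpolation at the nodes `Z_μ`, evaluated at `0`, reads
`A^{(j)} = ∑_μ A_μ^{(j)} ∏_{ν ≠ μ} Z_ν / (Z_ν - Z_μ) = A^{(N)} ∑_μ A_μ^{(j)} / (Z_μ U_μ)`.
-/

open Finset Polynomial

theorem Multiset.esymm_cons_succ {R : Type*} [CommSemiring R] (a : R) (s : Multiset R) (k : ℕ) :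
    (a ::ₘ s).esymm (k + 1) = s.esymm (k + 1) + a * s.esymm k := by
  simp [Multiset.esymm, Multiset.powersetCard_cons, Multiset.sum_map_mul_left]

theorem Finset.sum_powersetCard_succ_prod_eq_add {ι R : Type*} [CommSemiring R] [DecidableEq ι]
    {s : Finset ι} {a : ι} (ha : a ∈ s) (f : ι → R) (k : ℕ) :
    ∑ t ∈ s.powersetCard (k + 1), ∏ i ∈ t, f i =
      ∑ t ∈ (s.erase a).powersetCard (k + 1), ∏ i ∈ t, f i +
        f a * ∑ t ∈ (s.erase a).powersetCard k, ∏ i ∈ t, f i := by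
  simp only [← Finset.esymm_map_val]
  conv_lhs => rw [← insert_erase ha, insert_val_of_notMem (notMem_erase a s), Multiset.map_cons,
    Multiset.esymm_cons_succ]

-- `deflate A j` is the polynomial `f_j` above.
noncomputable def deflate {R : Type*} [CommRing R] (a : ℕ → R) : ℕ → R[X]
  | 0 => C (a 0)
  | j + 1 => C (a (j + 1)) - X * deflate a j

section deflate

variable {R : Type*} [CommRing R] (a : ℕ → R)

theorem natDegree_deflate_le : ∀ j, (deflate a j).natDegree ≤ j
  | 0 => (natDegree_C _).le
  | j + 1 => by
    have ih := natDegree_deflate_le j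
    rw [deflate]
    refine (natDegree_sub_le _ _).trans (max_le (by simp) (natDegree_mul_le.trans ?_))
    have hX := natDegree_X_le (R := R)
    omega

theorem eval_zero_deflate (j : ℕ) : (deflate a j).eval 0 = a j := by
  cases j <;> simp [deflate]

theorem eval_deflate {b : ℕ → R} {x : R} (h0 : a 0 = b 0)
    (hsucc : ∀ i, a (i + 1) = b (i + 1) + x * b i) : ∀ j, (deflate a j).eval x = b j
  | 0 => by simp [deflate, h0]
  | j + 1 => by simp [deflate, eval_deflate h0 hsucc j, hsucc]

end deflate

theorem Lagrange.eval_basis {F ι : Type*} [Field F] [DecidableEq ι] (s : Finset ι) (v : ι → F)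
    (i : ι) (x : F) :
    (Lagrange.basis s v i).eval x = ∏ j ∈ s.erase i, (x - v j) / (v i - v j) := by
  simp [Lagrange.basis, Lagrange.basisDivisor, eval_prod, div_eq_inv_mul]

theorem Lagrange.eval_eq_sum_of_degree_lt {F ι : Type*} [Field F] [DecidableEq ι]
    {s : Finset ι} {v : ι → F} (hvs : Set.InjOn v s) {f : F[X]} (hf : f.degree < #s) (x : F) :
    f.eval x = ∑ i ∈ s, f.eval (v i) * ∏ j ∈ s.erase i, (x - v j) / (v i - v j) := by
  conv_lhs => rw [Lagrange.eq_interpolate hvs hf]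
  simp [Lagrange.interpolate_apply, eval_finsetSum, Lagrange.eval_basis]

theorem stmt_4_general (N : ℕ) (Z : Fin N → ℝ)
    (hZ : Function.Injective Z) (hZ0 : ∀ μ, Z μ ≠ 0)
    (U : Fin N → ℝ) (hU : ∀ μ, U μ = ∏ ν ∈ univ.erase μ, (Z ν - Z μ))
    (A : ℕ → ℝ) (hAfull : ∀ i, A i = ∑ t ∈ (univ : Finset (Fin N)).powersetCard i, ∏ ν ∈ t, Z ν)
    (Amu : Fin N → ℕ → ℝ)
    (hAmu : ∀ μ i, Amu μ i = ∑ t ∈ (univ.erase μ).powersetCard i, ∏ ν ∈ t, Z ν) :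
    ∀ j : ℕ, j < N →
      ∑ μ, Amu μ j / (Z μ * U μ) = A j / ∏ μ, Z μ := by
  intro j hj
  have hdeg : (deflate A j).degree < #(univ : Finset (Fin N)) := by
    rw [card_univ, Fintype.card_fin]
    exact (degree_le_of_natDegree_le (natDegree_deflate_le A j)).trans_lt (by exact_mod_cast hj)
  have heval (μ : Fin N) : (deflate A j).eval (Z μ) = Amu μ j :=
    eval_deflate A (by simp [hAfull, hAmu])
      (fun i => by simp only [hAfull, hAmu, sum_powersetCard_succ_prod_eq_add (mem_univ μ)]) j
  have hweight (μ : Fin N) :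
      ∏ ν ∈ univ.erase μ, (0 - Z ν) / (Z μ - Z ν) = (∏ ν, Z ν) / (Z μ * U μ) := by
    rw [← mul_prod_erase univ Z (mem_univ μ), mul_div_mul_left _ _ (hZ0 μ), hU, ← prod_div_distrib]
    exact prod_congr rfl fun ν _ => by rw [zero_sub, neg_div, ← div_neg, neg_sub]
  have hprod : ∏ μ, Z μ ≠ 0 := prod_ne_zero_iff.mpr fun μ _ => hZ0 μ
  rw [← eval_zero_deflate A j, Lagrange.eval_eq_sum_of_degree_lt hZ.injOn hdeg, sum_div]
  refine sum_congr rfl fun μ _ => ?_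
  rw [heval, hweight]
  field_simp

theorem stmt_4 (N : ℕ) (hN : 0 < N) (Z : Fin N → ℝ)
    (hZ : Function.Injective Z) (hZ0 : ∀ μ, Z μ ≠ 0)
    (U : Fin N → ℝ) (hU : ∀ μ, U μ = ∏ ν ∈ univ.erase μ, (Z ν - Z μ))
    (A : ℕ → ℝ) (hAfull : ∀ i, A i = ∑ t ∈ (univ : Finset (Fin N)).powersetCard i, ∏ ν ∈ t, Z ν)
    (Amu : Fin N → ℕ → ℝ)
    (hAmu : ∀ μ i, Amu μ i = ∑ t ∈ (univ.erase μ).powersetCard i, ∏ ν ∈ t, Z ν) :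
    ∀ j : ℕ, j < N →
      ∑ μ, Amu μ j / (Z μ * U μ) = A j / ∏ μ, Z μ :=
  stmt_4_general N Z hZ hZ0 U hU A hAfull Amu hAmu
end

section
/- Let Z_1(x_1), ..., Z_N(x_N) be differentiable single-variable functions with pairwise distinct values, and A_μ^{(i)} the i-th elementary symmetric polynomial of {Z_ν(x_ν) : ν ≠ μ}. Then for μ ≠ ν, ∂A_μ^{(i)}/∂x_ν = (Z'_ν/(Z_ν − Z_μ)) · (A_μ^{(i)} − A_ν^{(i)}). -/
/-!
Split off the two special indices: with `s = {1, …, N} \ {μ, ν}` and `eₖ` the elementary symmetric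
polynomials of `{Z_ρ(x_ρ) : ρ ∈ s}`, for `i ≥ 1` one has `A_μ^{(i)} = e_i + Z_ν e_{i-1}` and
`A_ν^{(i)} = e_i + Z_μ e_{i-1}`. Since `e_i, e_{i-1}` do not depend on `x_ν`, both sides of the
identity equal `Z'_ν e_{i-1}`.
-/

open Finset

section ElementarySymmetric

variable {α R : Type*} [DecidableEq α] [CommSemiring R]

theorem sum_powersetCard_succ_insert_prod {s : Finset α} {a : α} (ha : a ∉ s) (k : ℕ)
    (f : α → R) :
    ∑ t ∈ (insert a s).powersetCard (k + 1), ∏ ρ ∈ t, f ρ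
      = ∑ t ∈ s.powersetCard (k + 1), ∏ ρ ∈ t, f ρ
        + f a * ∑ t ∈ s.powersetCard k, ∏ ρ ∈ t, f ρ := by
  simp only [← Finset.esymm_map_val, Finset.insert_val_of_notMem ha, Multiset.map_cons,
    Multiset.esymm, Multiset.powersetCard_cons, Multiset.map_add, Multiset.sum_add,
    Multiset.map_map, Function.comp_def, Multiset.prod_cons, Multiset.sum_map_mul_left]

theorem sum_powersetCard_succ_erase_prod [Fintype α] {μ ν : α} (h : μ ≠ ν) (k : ℕ)
    (f : α → R) :
    ∑ t ∈ (univ.erase μ).powersetCard (k + 1), ∏ ρ ∈ t, f ρ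
      = ∑ t ∈ ((univ.erase μ).erase ν).powersetCard (k + 1), ∏ ρ ∈ t, f ρ
        + f ν * ∑ t ∈ ((univ.erase μ).erase ν).powersetCard k, ∏ ρ ∈ t, f ρ := by
  conv_lhs => rw [← insert_erase (mem_erase.2 ⟨h.symm, mem_univ ν⟩)]
  exact sum_powersetCard_succ_insert_prod (notMem_erase _ _) k f

theorem sum_powersetCard_prod_update_of_notMem {β : Type*} {s : Finset α} {a : α} (ha : a ∉ s)
    (g : α → β → R) (x : α → β) (b : β) (k : ℕ) :
    ∑ t ∈ s.powersetCard k, ∏ ρ ∈ t, g ρ (Function.update x a b ρ)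
      = ∑ t ∈ s.powersetCard k, ∏ ρ ∈ t, g ρ (x ρ) :=
  sum_congr rfl fun _ ht => prod_congr rfl fun _ hρ => by
    rw [Function.update_of_ne (ne_of_mem_of_not_mem ((mem_powersetCard.1 ht).1 hρ) ha)]

end ElementarySymmetric

theorem stmt_8 (N : ℕ) (Z : Fin N → ℝ → ℝ)
    (hdiff : ∀ μ, Differentiable ℝ (Z μ))
    (A : Fin N → ℕ → (Fin N → ℝ) → ℝ)
    (hA : ∀ μ i y, A μ i y = ∑ t ∈ (univ.erase μ).powersetCard i, ∏ ν ∈ t, Z ν (y ν))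
    (x : Fin N → ℝ)
    (hne : ∀ μ ν, μ ≠ ν → Z μ (x μ) ≠ Z ν (x ν)) :
    ∀ μ ν : Fin N, μ ≠ ν → ∀ i : ℕ,
      deriv (fun t => A μ i (Function.update x ν t)) (x ν)
        = deriv (Z ν) (x ν) / (Z ν (x ν) - Z μ (x μ)) * (A μ i x - A ν i x) := by
  intro μ ν hμν i
  rcases i with _ | j
  · simp [hA]
  set s := (univ.erase μ).erase ν
  set e : ℕ → ℝ := fun k => ∑ t ∈ s.powersetCard k, ∏ ρ ∈ t, Z ρ (x ρ)
  have hA_update : ∀ t, A μ (j + 1) (Function.update x ν t) = e (j + 1) + Z ν t * e j := by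
    intro t
    rw [hA, sum_powersetCard_succ_erase_prod hμν, Function.update_self,
      sum_powersetCard_prod_update_of_notMem (notMem_erase ν _),
      sum_powersetCard_prod_update_of_notMem (notMem_erase ν _)]
  have hAμ : A μ (j + 1) x = e (j + 1) + Z ν (x ν) * e j := by
    simpa using hA_update (x ν)
  have hAν : A ν (j + 1) x = e (j + 1) + Z μ (x μ) * e j := by
    rw [hA, sum_powersetCard_succ_erase_prod hμν.symm, erase_right_comm]
  have hderiv : HasDerivAt (fun t => A μ (j + 1) (Function.update x ν t))
      (deriv (Z ν) (x ν) * e j) (x ν) := by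
    simp_rw [hA_update]
    exact ((hdiff ν _).hasDerivAt.mul_const _).const_add _
  have hZ : Z ν (x ν) - Z μ (x μ) ≠ 0 := sub_ne_zero.2 (hne ν μ hμν.symm)
  rw [hderiv.deriv, hAμ, hAν]
  field_simp
  ring
end

section
/- Suppose N ≥ 2 and F_1, ..., F_N : ℝ → ℝ are continuous single-variable functions and Z_1, ..., Z_N : ℝ → ℝ are differentiable, injective functions with Z'_μ ≠ 0 such that the values Z_μ(x_μ) are pairwise distinct on an open box domain, with U_μ = ∏_{ν≠μ}(Z_ν(x_ν) − Z_μ(x_μ)). If Σ_μ F_μ(x_μ)/U_μ = 0 identically on the domain, then there exist constants a_0, ..., a_{N−2} such that F_μ(x_μ) = Σ_{k=0}^{N−2} a_k (−Z_μ(x_μ))^k for every μ. -/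
open Finset

/-! At every point `x` of the box the identity says that the Lagrange interpolant of the data
`(Z_μ(x_μ), F_μ(x_μ))` has vanishing coefficient of `X^(N-1)`, i.e. degree at most `N - 2`.
Moving only the `μ`-th coordinate of a base point `y` leaves `N - 1` nodes and values unchanged,
and those determine a polynomial of degree at most `N - 2`; so the interpolant at
`update y μ (x μ)` is the interpolant `Q` at `y`, and evaluating it at the `μ`-th node gives
`F_μ(x_μ) = Q(Z_μ(x_μ))`. -/

open Polynomial

theorem Finset.prod_erase_sub_comm {R ι : Type*} [CommRing R] [DecidableEq ι] {s : Finset ι}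
    (v : ι → R) {i : ι} (hi : i ∈ s) :
    ∏ j ∈ s.erase i, (v j - v i) = (-1) ^ (#s - 1) * ∏ j ∈ s.erase i, (v i - v j) := by
  rw [← card_erase_of_mem hi, ← prod_const, ← prod_mul_distrib]
  exact prod_congr rfl fun j _ => by ring

namespace Lagrange

variable {K ι : Type*} [Field K] [DecidableEq ι] {s : Finset ι} {v : ι → K}

theorem degree_interpolate_lt_card_sub_one (hvs : Set.InjOn v s) {r : ι → K}
    (hr : ∑ i ∈ s, r i / ∏ j ∈ s.erase i, (v j - v i) = 0) :
    (interpolate s v r).degree < ↑(#s - 1) := by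
  have hsign : ∑ i ∈ s, r i / ∏ j ∈ s.erase i, (v j - v i) =
      (-1) ^ (#s - 1) * (interpolate s v r).coeff (#s - 1) := by
    rw [coeff_eq_sum hvs (degree_interpolate_lt r hvs), mul_sum]
    refine sum_congr rfl fun i hi => ?_
    rw [eval_interpolate_at_node r hvs hi, prod_erase_sub_comm v hi, div_mul_eq_div_div_swap,
      div_eq_mul_inv _ ((-1 : K) ^ _), ← inv_pow, inv_neg_one, mul_comm]
  have hcoeff : (interpolate s v r).coeff (#s - 1) = 0 := by simpa [hr] using hsign
  rw [degree_lt_iff_coeff_zero]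
  intro m hm
  rcases hm.eq_or_lt with rfl | hm
  · exact hcoeff
  · exact coeff_eq_zero_of_degree_lt
      ((degree_interpolate_le r hvs).trans_lt (by exact_mod_cast hm))

end Lagrange

open Lagrange in
theorem exists_degree_lt_eval_eq_of_sum_div_prod_eq_zero {K ι α : Type*} [Field K] [Fintype ι]
    [DecidableEq ι] (F Z : ι → α → K) (I : ι → Set α)
    (hinj : ∀ x : ι → α, (∀ μ, x μ ∈ I μ) → Function.Injective fun μ => Z μ (x μ))
    (hsum : ∀ x : ι → α, (∀ μ, x μ ∈ I μ) →
      ∑ μ, F μ (x μ) / ∏ ν ∈ univ.erase μ, (Z ν (x ν) - Z μ (x μ)) = 0) :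
    ∃ Q : K[X], Q.degree < ↑(Fintype.card ι - 1) ∧
      ∀ x : ι → α, (∀ μ, x μ ∈ I μ) → ∀ μ, F μ (x μ) = Q.eval (Z μ (x μ)) := by
  by_cases hbox : ∃ y : ι → α, ∀ μ, y μ ∈ I μ
  swap
  · exact ⟨0, by simp, fun x hx => (hbox ⟨x, hx⟩).elim⟩
  obtain ⟨y, hy⟩ := hbox
  set P : (ι → α) → K[X] := fun x => interpolate univ (fun ν => Z ν (x ν)) (fun ν => F ν (x ν))
  have hdeg : ∀ x : ι → α, (∀ μ, x μ ∈ I μ) → (P x).degree < ↑(Fintype.card ι - 1) :=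
    fun x hx => by
      simpa only [card_univ] using degree_interpolate_lt_card_sub_one (hinj x hx).injOn (hsum x hx)
  refine ⟨P y, hdeg y hy, fun x hx μ => ?_⟩
  set x' := Function.update y μ (x μ)
  have hx' : ∀ ν, x' ν ∈ I ν := fun ν => by
    rcases eq_or_ne ν μ with rfl | hνμ
    · simpa [x'] using hx ν
    · simpa [x', hνμ] using hy ν
  have hcard : #(univ.erase μ) = Fintype.card ι - 1 := by simp
  have hPx' : P x' = P y := by
    refine eq_of_degrees_lt_of_eval_index_eq _ (hinj y hy).injOn (hcard ▸ hdeg x' hx')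
      (hcard ▸ hdeg y hy) fun ν hν => ?_
    have hν' : x' ν = y ν := Function.update_of_ne (ne_of_mem_erase hν) _ _
    have hx'ν : (P x').eval (Z ν (x' ν)) = F ν (x' ν) :=
      eval_interpolate_at_node _ (hinj x' hx').injOn (mem_univ ν)
    have hyν : (P y).eval (Z ν (y ν)) = F ν (y ν) :=
      eval_interpolate_at_node _ (hinj y hy).injOn (mem_univ ν)
    rw [hν'] at hx'ν
    exact hx'ν.trans hyν.symm
  have hx'μ : x' μ = x μ := Function.update_self _ _ _
  calc F μ (x μ) = (P x').eval (Z μ (x' μ)) := by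
        rw [eval_interpolate_at_node _ (hinj x' hx').injOn (mem_univ μ), hx'μ]
    _ = (P y).eval (Z μ (x μ)) := by rw [hPx', hx'μ]

theorem Polynomial.eval_eq_sum_range_neg_one_pow_mul_coeff {R : Type*} [CommRing R] {p : R[X]}
    {n : ℕ} (hp : p.degree < n) (x : R) :
    p.eval x = ∑ k ∈ range n, (-1) ^ k * p.coeff k * (-x) ^ k := by
  rcases eq_or_ne p 0 with rfl | hp0
  · simp
  rw [eval_eq_sum_range' ((natDegree_lt_iff_degree_lt hp0).2 hp)]
  refine sum_congr rfl fun k _ => ?_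
  rw [mul_right_comm, ← mul_pow, neg_one_mul, neg_neg, mul_comm]

theorem stmt_12_general (N : ℕ)
    (F : Fin N → ℝ → ℝ)
    (Z : Fin N → ℝ → ℝ)
    (a b : Fin N → ℝ)
    (hne : ∀ x : Fin N → ℝ, (∀ μ, x μ ∈ Set.Ioo (a μ) (b μ)) →
      ∀ μ ν, μ ≠ ν → Z μ (x μ) ≠ Z ν (x ν))
    (hsum : ∀ x : Fin N → ℝ, (∀ μ, x μ ∈ Set.Ioo (a μ) (b μ)) →
      ∑ μ, F μ (x μ) / ∏ ν ∈ univ.erase μ, (Z ν (x ν) - Z μ (x μ)) = 0) :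
    ∃ c : ℕ → ℝ, ∀ (μ : Fin N) (x : Fin N → ℝ), (∀ ν, x ν ∈ Set.Ioo (a ν) (b ν)) →
      F μ (x μ) = ∑ k ∈ range (N - 1), c k * (-(Z μ (x μ))) ^ k := by
  obtain ⟨Q, hQdeg, hQ⟩ := exists_degree_lt_eval_eq_of_sum_div_prod_eq_zero F Z _
    (fun x hx μ ν hZ => by_contra fun hμν => hne x hx μ ν hμν hZ) hsum
  rw [Fintype.card_fin] at hQdeg
  exact ⟨fun k => (-1) ^ k * Q.coeff k, fun μ x hx => by
    rw [hQ x hx μ, eval_eq_sum_range_neg_one_pow_mul_coeff hQdeg]⟩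

theorem stmt_12 (N : ℕ) (hN : 2 ≤ N)
    (F : Fin N → ℝ → ℝ) (hF : ∀ μ, Continuous (F μ))
    (Z : Fin N → ℝ → ℝ)
    (hZdiff : ∀ μ, Differentiable ℝ (Z μ))
    (hZ' : ∀ μ t, deriv (Z μ) t ≠ 0)
    (hZinj : ∀ μ, Function.Injective (Z μ))
    (a b : Fin N → ℝ) (hab : ∀ μ, a μ < b μ)
    (hne : ∀ x : Fin N → ℝ, (∀ μ, x μ ∈ Set.Ioo (a μ) (b μ)) →
      ∀ μ ν, μ ≠ ν → Z μ (x μ) ≠ Z ν (x ν))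
    (hsum : ∀ x : Fin N → ℝ, (∀ μ, x μ ∈ Set.Ioo (a μ) (b μ)) →
      ∑ μ, F μ (x μ) / ∏ ν ∈ univ.erase μ, (Z ν (x ν) - Z μ (x μ)) = 0) :
    ∃ c : ℕ → ℝ, ∀ (μ : Fin N) (x : Fin N → ℝ), (∀ ν, x ν ∈ Set.Ioo (a ν) (b ν)) →
      F μ (x μ) = ∑ k ∈ range (N - 1), c k * (-(Z μ (x μ))) ^ k :=
  stmt_12_general N F Z a b hne hsum
end
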